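/- Under the hypotheses of the continuous-time Lyapunov theorem (E non-increasing with A_t = a_t b_t, 0 ≤ Ȧ_t ≤ a_t), for every t > 0 one has f(X(t)) − f(x*) ≤ (A₀/A_t)(f(x₀) − f(x*)) + ‖x₀ − x*‖²/(2 A_t). -/

import Mathlib

/-!
The energy `E t = A t (f (X t) - f x*) + ‖Z t - x*‖² / 2` is non-increasing along the
trajectory. Substituting `Z = b Ẋ + c ∇f(X) + X` and `Ż = -a ∇f(X)`, the terms in `⟪∇f(X), Ẋ⟫`
cancel and `Ė = Ȧ (f X - f x*) - a c ‖∇f X‖² - a ⟪∇f X, X - x*⟫`, which is `≤ 0` because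
`Ȧ ≤ a`, `f X - f x* ≥ 0` and convexity gives `f X - f x* ≤ ⟪∇f X, X - x*⟫`. Hence
`A t (f (X t) - f x*) ≤ E t ≤ E 0 = A 0 (f x₀ - f x*) + ‖x₀ - x*‖² / 2`.
-/

open scoped RealInnerProductSpace

section

variable {H : Type*} [NormedAddCommGroup H]

noncomputable def lyapunovEnergy (f : H → ℝ) (xs : H) (A : ℝ → ℝ) (X Z : ℝ → H)
    (t : ℝ) : ℝ :=
  A t * (f (X t) - f xs) + ‖Z t - xs‖ ^ 2 / 2

theorem sub_le_of_lyapunovEnergy_le {f : H → ℝ} {xs x0 : H} {A : ℝ → ℝ} {X Z : ℝ → H}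
    {t : ℝ} (hAt : 0 < A t) (hX0 : X 0 = x0) (hZ0 : Z 0 = x0)
    (hE : lyapunovEnergy f xs A X Z t ≤ lyapunovEnergy f xs A X Z 0) :
    f (X t) - f xs ≤ A 0 / A t * (f x0 - f xs) + ‖x0 - xs‖ ^ 2 / (2 * A t) := by
  rw [lyapunovEnergy, lyapunovEnergy, hX0, hZ0] at hE
  have hscaled : A t * (f (X t) - f xs) ≤ A 0 * (f x0 - f xs) + ‖x0 - xs‖ ^ 2 / 2 := by
    nlinarith [sq_nonneg ‖Z t - xs‖]
  rw [show A 0 / A t * (f x0 - f xs) + ‖x0 - xs‖ ^ 2 / (2 * A t)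
      = (A 0 * (f x0 - f xs) + ‖x0 - xs‖ ^ 2 / 2) / A t by field_simp,
    le_div_iff₀ hAt, mul_comm]
  exact hscaled

variable [InnerProductSpace ℝ H]

theorem ConvexOn.add_inner_gradient_le [CompleteSpace H] {f : H → ℝ} {s : Set H}
    (hf : ConvexOn ℝ s f) {x y g : H} (hx : x ∈ s) (hy : y ∈ s) (hg : HasGradientAt f g x) :
    f x + ⟪g, y - x⟫ ≤ f y := by
  set ℓ : ℝ →ᵃ[ℝ] H := AffineMap.lineMap x y
  have hderiv : HasDerivAt (f ∘ ℓ) ⟪g, y - x⟫ 0 := by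
    have hg' : HasFDerivAt f (InnerProductSpace.toDual ℝ H g) (ℓ 0) := by
      simpa [ℓ] using hg.hasFDerivAt
    simpa using hg'.comp_hasDerivAt 0 AffineMap.hasDerivAt_lineMap
  have hslope := (hf.comp_affineMap ℓ).le_slope_of_hasDerivAt (by simpa [ℓ] using hx)
    (by simpa [ℓ] using hy) zero_lt_one hderiv
  simp only [slope_def_field, Function.comp_apply, ℓ, AffineMap.lineMap_apply_zero,
    AffineMap.lineMap_apply_one, sub_zero, div_one] at hslope
  linarith

theorem hasDerivAt_lyapunovEnergy [CompleteSpace H] {f : H → ℝ} {g xs : H} {A : ℝ → ℝ}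
    {X Z : ℝ → H} {A' t : ℝ} {X' Z' : H} (hf : HasGradientAt f g (X t))
    (hA : HasDerivAt A A' t) (hX : HasDerivAt X X' t) (hZ : HasDerivAt Z Z' t) :
    HasDerivAt (lyapunovEnergy f xs A X Z)
      (A' * (f (X t) - f xs) + A t * ⟪g, X'⟫ + ⟪Z t - xs, Z'⟫) t := by
  have hfX : HasDerivAt (fun s => f (X s)) ⟪g, X'⟫ t := by
    simpa [Function.comp_def] using hf.hasFDerivAt.comp_hasDerivAt t hX
  have h := (hA.mul (hfX.sub_const (f xs))).add (((hZ.sub_const xs).norm_sq).div_const 2)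
  exact h.congr_deriv (by ring)

theorem lyapunov_derivative_nonpos {fX fs a b c A' : ℝ} {G X' Xt Zt xs : H}
    (hZ : Zt = b • X' + c • G + Xt) (ha : 0 ≤ a) (hc : 0 ≤ c) (hA' : A' ≤ a)
    (hgap : 0 ≤ fX - fs) (htangent : fX + ⟪G, xs - Xt⟫ ≤ fs) :
    A' * (fX - fs) + a * b * ⟪G, X'⟫ + ⟪Zt - xs, -a • G⟫ ≤ 0 := by
  have hexpand : ⟪Zt - xs, -a • G⟫ =
      -(a * b * ⟪G, X'⟫) - a * c * ‖G‖ ^ 2 + a * ⟪G, xs - Xt⟫ := by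
    rw [hZ, show b • X' + c • G + Xt - xs = b • X' + c • G - (xs - Xt) by abel,
      real_inner_comm, inner_smul_left, inner_sub_right, inner_add_right, inner_smul_right,
      inner_smul_right, real_inner_self_eq_norm_sq, conj_trivial]
    ring
  rw [hexpand]
  nlinarith [mul_le_mul_of_nonneg_right hA' hgap, mul_le_mul_of_nonneg_left htangent ha,
    mul_nonneg (mul_nonneg ha hc) (sq_nonneg ‖G‖)]

end

theorem sppa_stmt1_general
    {H : Type*} [NormedAddCommGroup H] [InnerProductSpace ℝ H] [CompleteSpace H]
    (f : H → ℝ) (g : H → H)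
    (hconv : ConvexOn ℝ Set.univ f)
    (hgrad : ∀ x, HasGradientAt f (g x) x)
    (xs : H) (hmin : ∀ y, f xs ≤ f y)
    (a b c : ℝ → ℝ)
    (hapos : ∀ t > (0:ℝ), 0 < a t) (hbpos : ∀ t > (0:ℝ), 0 < b t)
    (hcpos : ∀ t > (0:ℝ), 0 < c t)
    (x0 : H) (X Z X' : ℝ → H)
    (hX0 : X 0 = x0) (hZ0 : Z 0 = x0)
    (hX : ∀ t ∈ Set.Ici (0:ℝ), HasDerivAt X (X' t) t)
    (hZeq : ∀ t ∈ Set.Ici (0:ℝ), Z t = b t • X' t + c t • g (X t) + X t)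
    (hZ' : ∀ t ∈ Set.Ici (0:ℝ), HasDerivAt Z (-(a t) • g (X t)) t)
    (A' : ℝ → ℝ)
    (hA : ∀ t ∈ Set.Ici (0:ℝ), HasDerivAt (fun s => a s * b s) (A' t) t)
    (hA'le : ∀ t ∈ Set.Ici (0:ℝ), A' t ≤ a t) :
    ∀ t > (0:ℝ),
      f (X t) - f xs ≤
        (a 0 * b 0) / (a t * b t) * (f x0 - f xs)
          + ‖x0 - xs‖^2 / (2 * (a t * b t)) := by
  intro t ht
  set E := lyapunovEnergy f xs (fun s => a s * b s) X Z
  have hE : ∀ s ∈ Set.Ici (0:ℝ), HasDerivAt E (A' s * (f (X s) - f xs)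
      + a s * b s * ⟪g (X s), X' s⟫ + ⟪Z s - xs, -a s • g (X s)⟫) s := fun s hs =>
    hasDerivAt_lyapunovEnergy (hgrad (X s)) (hA s hs) (hX s hs) (hZ' s hs)
  have hanti : AntitoneOn E (Set.Ici 0) := by
    refine antitoneOn_of_hasDerivWithinAt_nonpos (convex_Ici 0)
      (fun s hs => (hE s hs).continuousAt.continuousWithinAt)
      (fun s hs => (hE s (interior_subset hs)).hasDerivWithinAt) fun s hs => ?_
    rw [interior_Ici] at hs
    have hs₀ : s ∈ Set.Ici 0 := Set.mem_Ici.2 (le_of_lt hs)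
    exact lyapunov_derivative_nonpos (hZeq s hs₀) (hapos s hs).le (hcpos s hs).le
      (hA'le s hs₀) (sub_nonneg.2 (hmin _))
      (hconv.add_inner_gradient_le trivial trivial (hgrad _))
  exact sub_le_of_lyapunovEnergy_le (A := fun s => a s * b s)
    (mul_pos (hapos t ht) (hbpos t ht)) hX0 hZ0 (hanti Set.self_mem_Ici ht.le ht.le)

/-- Continuous-time convergence rate
`f(X t) - f x* ≤ (A₀/A_t)(f x₀ - f x*) + ‖x₀ - x*‖²/(2 A_t)` for `t > 0`. -/
theorem sppa_stmt1
    {H : Type*} [NormedAddCommGroup H] [InnerProductSpace ℝ H] [CompleteSpace H]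
    (f : H → ℝ) (g : H → H)
    (hconv : ConvexOn ℝ Set.univ f)
    (hgrad : ∀ x, HasGradientAt f (g x) x)
    (xs : H) (hmin : ∀ y, f xs ≤ f y)
    (a b c : ℝ → ℝ)
    (hapos : ∀ t > (0:ℝ), 0 < a t) (hbpos : ∀ t > (0:ℝ), 0 < b t)
    (hcpos : ∀ t > (0:ℝ), 0 < c t)
    (ha0 : 0 ≤ a 0) (hb0 : 0 ≤ b 0) (hc0 : 0 ≤ c 0)
    (x0 : H) (X Z X' : ℝ → H)
    (hX0 : X 0 = x0) (hZ0 : Z 0 = x0)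
    (hX : ∀ t ∈ Set.Ici (0:ℝ), HasDerivAt X (X' t) t)
    (hZeq : ∀ t ∈ Set.Ici (0:ℝ), Z t = b t • X' t + c t • g (X t) + X t)
    (hZ' : ∀ t ∈ Set.Ici (0:ℝ), HasDerivAt Z (-(a t) • g (X t)) t)
    (A' : ℝ → ℝ)
    (hA : ∀ t ∈ Set.Ici (0:ℝ), HasDerivAt (fun s => a s * b s) (A' t) t)
    (hA'nonneg : ∀ t ∈ Set.Ici (0:ℝ), 0 ≤ A' t)
    (hA'le : ∀ t ∈ Set.Ici (0:ℝ), A' t ≤ a t) :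
    ∀ t > (0:ℝ),
      f (X t) - f xs ≤
        (a 0 * b 0) / (a t * b t) * (f x0 - f xs)
          + ‖x0 - xs‖^2 / (2 * (a t * b t)) :=
  sppa_stmt1_general f g hconv hgrad xs hmin a b c hapos hbpos hcpos x0 X Z X' hX0 hZ0 hX hZeq hZ'
    A' hA hA'le
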